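/- Fix an integer d ≥ 3 and B ∈ ℝ. For θ > 1 let t_*(θ) denote the unique fixed point of F_{θ,B}. Then the map θ ↦ F_{θ,B}'(t_*(θ)) is strictly decreasing on (1,∞); equivalently, since F_{θ,B}'(t_*(θ)) < 0, the derivative (F_{θ,B} ∘ F_{θ,B})'(t_*(θ)) = F_{θ,B}'(t_*(θ))^2 is strictly increasing in θ. -/

import Mathlib

/-!
Writing `F_{θ,B}'(t) = -(d - 1) (θ² - 1) / (θ² + 1 + 2θ cosh t)`, the slope at the fixed point is
governed by two effects, both pushing in the same direction as `θ` grows: for fixed `t` the factor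
`(θ² - 1) / (θ² + 1 + 2θ cosh t)` increases with `θ`, and the fixed point `t_*(θ)`, which has the
sign of `B` because `F_{θ,B}(0) = 2B`, moves towards `0` (for `t ≥ 0`, `F_{θ,B}(t)` decreases in
`θ`), which makes `cosh t_*(θ)` smaller.
-/

open Set

noncomputable def isingF (d : ℕ) (θ B t : ℝ) : ℝ :=
  2 * B + ((d:ℝ) - 1) * Real.log ((Real.exp t + θ) / (θ * Real.exp t + 1))

open Real

/-- `-F_{θ,B}'(t) / (d - 1)`, which is `(θ² - 1) eᵗ / ((eᵗ + θ)(θ eᵗ + 1))` with numerator and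
denominator divided by `eᵗ`. -/
noncomputable def isingSlope (θ t : ℝ) : ℝ := (θ ^ 2 - 1) / (θ ^ 2 + 1 + 2 * θ * cosh t)

lemma isingSlope_denom_pos {θ : ℝ} (hθ : 0 ≤ θ) (t : ℝ) : 0 < θ ^ 2 + 1 + 2 * θ * cosh t := by
  positivity

lemma isingSlope_pos {θ : ℝ} (hθ : 1 < θ) (t : ℝ) : 0 < isingSlope θ t :=
  div_pos (by nlinarith) (isingSlope_denom_pos (by linarith) t)

lemma strictMonoOn_isingSlope (t : ℝ) : StrictMonoOn (isingSlope · t) (Ici 0) := by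
  intro θ₁ (h₁ : 0 ≤ θ₁) θ₂ (h₂ : 0 ≤ θ₂) h12
  simp only [isingSlope]
  rw [div_lt_div_iff₀ (isingSlope_denom_pos h₁ t) (isingSlope_denom_pos h₂ t)]
  nlinarith [mul_pos (sub_pos.2 h12) (show 0 < 2 * (θ₁ + θ₂) + 2 * cosh t * (θ₁ * θ₂ + 1) by positivity)]

lemma isingSlope_le_of_abs_le {θ s t : ℝ} (hθ : 1 ≤ θ) (hst : |s| ≤ |t|) :
    isingSlope θ t ≤ isingSlope θ s :=
  div_le_div_of_nonneg_left (by nlinarith) (isingSlope_denom_pos (by linarith) s)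
    (by gcongr; exact cosh_le_cosh.2 hst)

lemma hasDerivAt_isingF (d : ℕ) (B : ℝ) {θ : ℝ} (hθ : 0 ≤ θ) (t : ℝ) :
    HasDerivAt (isingF d θ B) (-(((d:ℝ) - 1) * isingSlope θ t)) t := by
  have hu : 0 < exp t + θ := by positivity
  have hv : 0 < θ * exp t + 1 := by positivity
  have hratio := ((hasDerivAt_exp t).add_const θ).div
    (((hasDerivAt_exp t).const_mul θ).add_const 1) hv.ne'
  refine (((hratio.log (div_pos hu hv).ne').const_mul ((d:ℝ) - 1)).const_add (2 * B)).congr_deriv ?_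
  have hcosh : (θ ^ 2 + 1 + 2 * θ * cosh t) * exp t = (exp t + θ) * (θ * exp t + 1) := by
    rw [cosh_eq, exp_neg]
    field_simp
    ring
  rw [isingSlope, ← mul_div_mul_right (θ ^ 2 - 1) _ (exp_pos t).ne', hcosh, Pi.div_apply]
  field_simp
  ring

lemma isingF_zero (d : ℕ) (B : ℝ) {θ : ℝ} (hθ : 0 ≤ θ) : isingF d θ B 0 = 2 * B := by
  rw [isingF, exp_zero, mul_one, add_comm θ, div_self (by positivity), log_one, mul_zero, add_zero]

lemma isingF_neg (d : ℕ) (B θ t : ℝ) : isingF d θ (-B) (-t) = -isingF d θ B t := by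
  have hratio : (exp (-t) + θ) / (θ * exp (-t) + 1) = ((exp t + θ) / (θ * exp t + 1))⁻¹ := by
    rw [exp_neg, inv_div]
    field_simp
    ring
  rw [isingF, isingF, hratio, log_inv]
  ring

lemma isingF_le_of_theta_le {d : ℕ} (hd : 1 ≤ d) (B : ℝ) {θ₁ θ₂ t : ℝ} (h₁ : 0 ≤ θ₁) (h12 : θ₁ ≤ θ₂)
    (ht : 0 ≤ t) : isingF d θ₂ B t ≤ isingF d θ₁ B t := by
  have hd' : (0 : ℝ) ≤ d - 1 := by rw [sub_nonneg]; exact_mod_cast hd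
  have h₂ : 0 ≤ θ₂ := h₁.trans h12
  have hx : 1 ≤ exp t := one_le_exp ht
  have hratio : (exp t + θ₂) / (θ₂ * exp t + 1) ≤ (exp t + θ₁) / (θ₁ * exp t + 1) := by
    rw [div_le_div_iff₀ (by positivity) (by positivity)]
    nlinarith [mul_nonneg (sub_nonneg.2 h12) (show 0 ≤ exp t ^ 2 - 1 by nlinarith)]
  unfold isingF
  gcongr

lemma strictAnti_isingF {d : ℕ} (hd : 1 < d) (B : ℝ) {θ : ℝ} (hθ : 1 < θ) :
    StrictAnti (isingF d θ B) := by
  refine strictAnti_of_hasDerivAt_neg (hasDerivAt_isingF d B (by linarith)) fun t => ?_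
  have hd' : (0 : ℝ) < d - 1 := by rw [sub_pos]; exact_mod_cast hd
  exact neg_lt_zero.2 (mul_pos hd' (isingSlope_pos hθ t))

lemma isingF_fixedPoint_nonneg {d : ℕ} (hd : 1 < d) {B θ t : ℝ} (hB : 0 ≤ B) (hθ : 1 < θ)
    (ht : isingF d θ B t = t) : 0 ≤ t := by
  by_contra! htneg
  have := strictAnti_isingF hd B hθ htneg
  rw [ht, isingF_zero d B (by linarith)] at this
  linarith

lemma isingF_fixedPoint_anti {d : ℕ} (hd : 1 < d) {B θ₁ θ₂ t₁ t₂ : ℝ} (hB : 0 ≤ B)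
    (h₁ : 1 < θ₁) (h12 : θ₁ ≤ θ₂) (ht₁ : isingF d θ₁ B t₁ = t₁) (ht₂ : isingF d θ₂ B t₂ = t₂) :
    t₂ ≤ t₁ := by
  by_contra! hlt
  have hstep := strictAnti_isingF hd B (h₁.trans_le h12) hlt
  have hθ := isingF_le_of_theta_le hd.le B (by linarith) h12 (isingF_fixedPoint_nonneg hd hB h₁ ht₁)
  linarith

lemma abs_isingF_fixedPoint_anti {d : ℕ} (hd : 1 < d) {B θ₁ θ₂ t₁ t₂ : ℝ}
    (h₁ : 1 < θ₁) (h12 : θ₁ ≤ θ₂) (ht₁ : isingF d θ₁ B t₁ = t₁) (ht₂ : isingF d θ₂ B t₂ = t₂) :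
    |t₂| ≤ |t₁| := by
  have h₂ := h₁.trans_le h12
  rcases le_total 0 B with hB | hB
  · rw [abs_of_nonneg (isingF_fixedPoint_nonneg hd hB h₂ ht₂),
      abs_of_nonneg (isingF_fixedPoint_nonneg hd hB h₁ ht₁)]
    exact isingF_fixedPoint_anti hd hB h₁ h12 ht₁ ht₂
  · -- reduce to `0 ≤ -B` through the symmetry `F_{θ,-B}(-t) = -F_{θ,B}(t)`
    have hfix {θ t : ℝ} (ht : isingF d θ B t = t) : isingF d θ (-B) (-t) = -t := by
      rw [isingF_neg, ht]
    have hB' := neg_nonneg.2 hB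
    rw [← abs_neg t₁, ← abs_neg t₂, abs_of_nonneg (isingF_fixedPoint_nonneg hd hB' h₂ (hfix ht₂)),
      abs_of_nonneg (isingF_fixedPoint_nonneg hd hB' h₁ (hfix ht₁))]
    exact isingF_fixedPoint_anti hd hB' h₁ h12 (hfix ht₁) (hfix ht₂)

theorem stmt14_general (d : ℕ) (hd : 3 ≤ d) (B : ℝ) (ts : ℝ → ℝ) (f' : ℝ → ℝ)
    (hts : ∀ θ : ℝ, 1 < θ → isingF d θ B (ts θ) = ts θ)
    (hf' : ∀ θ : ℝ, 1 < θ → HasDerivAt (isingF d θ B) (f' θ) (ts θ)) :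
    StrictAntiOn f' (Ioi 1) ∧
    (∀ θ : ℝ, 1 < θ → f' θ < 0) ∧
    StrictMonoOn (fun θ => (f' θ) ^ 2) (Ioi 1) := by
  have hd₁ : 1 < d := by omega
  have hd₁' : (0 : ℝ) < d - 1 := by rw [sub_pos]; exact_mod_cast hd₁
  have hf'_eq (θ : ℝ) (hθ : 1 < θ) : f' θ = -(((d:ℝ) - 1) * isingSlope θ (ts θ)) :=
    (hf' θ hθ).unique (hasDerivAt_isingF d B (by linarith) (ts θ))
  have hneg (θ : ℝ) (hθ : 1 < θ) : f' θ < 0 := by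
    rw [hf'_eq θ hθ, neg_lt_zero]
    exact mul_pos hd₁' (isingSlope_pos hθ (ts θ))
  have hanti : StrictAntiOn f' (Ioi 1) := by
    intro θ₁ (h₁ : 1 < θ₁) θ₂ (h₂ : 1 < θ₂) h12
    rw [hf'_eq θ₁ h₁, hf'_eq θ₂ h₂, neg_lt_neg_iff]
    refine mul_lt_mul_of_pos_left ?_ hd₁'
    calc isingSlope θ₁ (ts θ₁) < isingSlope θ₂ (ts θ₁) :=
          strictMonoOn_isingSlope (ts θ₁) (mem_Ici.2 (by linarith))
            (mem_Ici.2 (by linarith)) h12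
      _ ≤ isingSlope θ₂ (ts θ₂) :=
          isingSlope_le_of_abs_le (le_of_lt h₂)
            (abs_isingF_fixedPoint_anti hd₁ h₁ h12.le (hts θ₁ h₁) (hts θ₂ h₂))
  refine ⟨hanti, hneg, fun θ₁ h₁ θ₂ h₂ h12 => ?_⟩
  have hlt := hanti h₁ h₂ h12
  have hneg₁ := hneg θ₁ h₁
  show f' θ₁ ^ 2 < f' θ₂ ^ 2
  nlinarith

theorem stmt14 (d : ℕ) (hd : 3 ≤ d) (B : ℝ) (ts : ℝ → ℝ) (f' : ℝ → ℝ)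
    (hts : ∀ θ : ℝ, 1 < θ → isingF d θ B (ts θ) = ts θ)
    (htsu : ∀ θ : ℝ, 1 < θ → ∀ s : ℝ, isingF d θ B s = s → s = ts θ)
    (hf' : ∀ θ : ℝ, 1 < θ → HasDerivAt (isingF d θ B) (f' θ) (ts θ)) :
    StrictAntiOn f' (Ioi 1) ∧
    (∀ θ : ℝ, 1 < θ → f' θ < 0) ∧
    StrictMonoOn (fun θ => (f' θ) ^ 2) (Ioi 1) :=
  stmt14_general d hd B ts f' hts hf'
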